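/- Let f: R^{n×p} → R be twice continuously differentiable with ‖∇²f(X)‖ ≤ ρ on an open convex set containing the Stiefel manifold, and let γ > ρ. For X̄ with orthonormal columns and X⁺ = X̄ Q obtained from the proximal correction step (Q = -U V^T from an SVD of Z = X̄^T ∇f(X̄) - γ I_p, or X⁺ = X̄ if Z = 0), one has f(X̄) - f(X⁺) ≥ (1/(8 c_γ)) ‖X̄^T ∇f(X̄) - ∇f(X̄)^T X̄‖_F^2, where c_γ = M + γ and M bounds ‖∇f‖_2 on the Stiefel manifold. -/

import Mathlib

open Matrix BigOperators

attribute [local instance]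
  Matrix.frobeniusNormedAddCommGroup Matrix.frobeniusNormedSpace

noncomputable def frobSq {m n : Type*} [Fintype m] [Fintype n] (A : Matrix m n ℝ) : ℝ :=
  ∑ i, ∑ j, (A i j) ^ 2

/-- The gradient of `f` with respect to the Frobenius inner product,
expressed entrywise via the Fréchet derivative. -/
noncomputable def grad {n p : ℕ} (f : Matrix (Fin n) (Fin p) ℝ → ℝ)
    (X : Matrix (Fin n) (Fin p) ℝ) : Matrix (Fin n) (Fin p) ℝ :=
  Matrix.of fun i j => fderiv ℝ f X (Matrix.single i j 1)

/-! For every orthogonal `Q`, the bound `ρ ≤ γ` on the Hessian makes the quadratic upper model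
give `f (X̄ Q) ≤ f X̄ + tr ((Q - 1)ᵀ Z)` with `Z = X̄ᵀ ∇f(X̄) - γ 1 = U S Vᵀ`. For `Q = -U Vᵀ` the
right-hand side is `f X̄ - (tr S + tr Z) = f X̄ - ½ ∑ⱼ σⱼ ‖uⱼ + vⱼ‖²`. On the other hand
`X̄ᵀ ∇f - ∇fᵀ X̄ = Z - Zᵀ = B - Bᵀ` with `B = (U + V) S Vᵀ`, so its squared norm is at most
`4 ‖B‖² = 4 ∑ⱼ σⱼ² ‖uⱼ + vⱼ‖²`, and every singular value satisfies `σⱼ ≤ M + γ`. -/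

theorem Convex.image_le_add_fderiv_add_sq_of_lipschitz {E : Type*} [NormedAddCommGroup E]
    [NormedSpace ℝ E] {f : E → ℝ} {f' : E → E →L[ℝ] ℝ} {s : Set E} (hs : Convex ℝ s) {ρ : ℝ}
    (hf : ∀ z ∈ s, HasFDerivAt f (f' z) z)
    (hlip : ∀ z ∈ s, ∀ w ∈ s, ‖f' w - f' z‖ ≤ ρ * ‖w - z‖) {x y : E} (hx : x ∈ s) (hy : y ∈ s) :
    f y ≤ f x + f' x (y - x) + ρ / 2 * ‖y - x‖ ^ 2 := by
  set d := y - x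
  have hseg : ∀ t ∈ Set.Icc (0 : ℝ) 1, x + t • d ∈ s := fun t ht => by
    simpa [d, smul_sub, sub_smul, add_sub, add_comm, add_left_comm] using
      hs hx hy (sub_nonneg.2 ht.2) ht.1 (by ring)
  -- `f` minus its quadratic model, along the segment: an antitone function.
  set g : ℝ → ℝ := fun t => f (x + t • d) - (f' x d * t + ρ / 2 * ‖d‖ ^ 2 * t ^ 2)
  have hg : ∀ t ∈ Set.Icc (0 : ℝ) 1,
      HasDerivAt g (f' (x + t • d) d - (f' x d + ρ / 2 * ‖d‖ ^ 2 * (2 * t))) t := by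
    intro t ht
    have hline : HasDerivAt (fun t : ℝ => x + t • d) d t := by
      simpa using ((hasDerivAt_id t).smul_const d).const_add x
    have hquad : HasDerivAt (fun t : ℝ => f' x d * t + ρ / 2 * ‖d‖ ^ 2 * t ^ 2)
        (f' x d + ρ / 2 * ‖d‖ ^ 2 * (2 * t)) t := by
      simpa [Pi.add_def] using ((hasDerivAt_id t).const_mul (f' x d)).add
        ((hasDerivAt_pow 2 t).const_mul (ρ / 2 * ‖d‖ ^ 2))
    exact ((hf _ (hseg t ht)).comp_hasDerivAt t hline).sub hquad
  have hanti : AntitoneOn g (Set.Icc 0 1) := by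
    refine antitoneOn_of_deriv_nonpos (convex_Icc 0 1)
      (fun t ht => (hg t ht).continuousAt.continuousWithinAt) ?_ ?_ <;>
      rw [interior_Icc] <;> intro t ht
    · exact (hg t (Set.Ioo_subset_Icc_self ht)).differentiableAt.differentiableWithinAt
    rw [(hg t (Set.Ioo_subset_Icc_self ht)).deriv]
    have hdist : ‖x + t • d - x‖ = t * ‖d‖ := by
      rw [add_sub_cancel_left, norm_smul, Real.norm_of_nonneg ht.1.le]
    have hgap : f' (x + t • d) d - f' x d ≤ ρ * t * ‖d‖ ^ 2 :=
      calc f' (x + t • d) d - f' x d ≤ ‖(f' (x + t • d) - f' x) d‖ := le_abs_self _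
        _ ≤ ‖f' (x + t • d) - f' x‖ * ‖d‖ := ContinuousLinearMap.le_opNorm _ _
        _ ≤ ρ * (t * ‖d‖) * ‖d‖ := by
          rw [← hdist]; gcongr; exact hlip x hx _ (hseg t (Set.Ioo_subset_Icc_self ht))
        _ = ρ * t * ‖d‖ ^ 2 := by ring
    linarith
  have h01 := hanti (by simp) (by simp) zero_le_one
  simp only [g, zero_smul, add_zero, one_smul, one_pow, mul_one, mul_zero, zero_pow two_ne_zero,
    d, add_sub_cancel] at h01
  linarith

theorem ContDiffOn.image_le_add_fderiv_add_sq {E : Type*} [NormedAddCommGroup E]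
    [NormedSpace ℝ E] {f : E → ℝ} {Ω : Set E} (hf : ContDiffOn ℝ 2 f Ω) (hΩo : IsOpen Ω)
    (hΩc : Convex ℝ Ω) {ρ : ℝ} (hρ : ∀ z ∈ Ω, ‖iteratedFDeriv ℝ 2 f z‖ ≤ ρ) {x y : E}
    (hx : x ∈ Ω) (hy : y ∈ Ω) :
    f y ≤ f x + fderiv ℝ f x (y - x) + ρ / 2 * ‖y - x‖ ^ 2 := by
  have hdiff : ∀ z ∈ Ω, HasFDerivAt f (fderiv ℝ f z) z := fun z hz =>
    ((hf.differentiableOn two_ne_zero).differentiableAt (hΩo.mem_nhds hz)).hasFDerivAt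
  have hf' := (hf.fderiv_of_isOpen hΩo (by norm_num : (1 : WithTop ℕ∞) + 1 ≤ 2))
  have hlip : ∀ z ∈ Ω, ∀ w ∈ Ω, ‖fderiv ℝ f w - fderiv ℝ f z‖ ≤ ρ * ‖w - z‖ :=
    fun z hz w hw => hΩc.norm_image_sub_le_of_norm_fderiv_le
      (fun u hu => (hf'.differentiableOn one_ne_zero).differentiableAt (hΩo.mem_nhds hu))
      (fun u hu => by rw [← norm_iteratedFDeriv_one, norm_iteratedFDeriv_fderiv]; exact hρ u hu)
      hz hw
  exact hΩc.image_le_add_fderiv_add_sq_of_lipschitz hdiff hlip hx hy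

section Frobenius

variable {m k l : Type*} [Fintype m]

lemma transpose_mul_self_mul_eq_one [Fintype k] [DecidableEq k] [DecidableEq l] {X : Matrix m k ℝ}
    {Q : Matrix k l ℝ} (hX : Xᵀ * X = 1) (hQ : Qᵀ * Q = 1) : (X * Q)ᵀ * (X * Q) = 1 := by
  rw [transpose_mul, Matrix.mul_assoc, ← Matrix.mul_assoc Xᵀ, hX, Matrix.one_mul, hQ]

lemma transpose_mul_self_neg_mul_transpose_eq_one [Fintype k] [DecidableEq k]
    {U V : Matrix k k ℝ} (hU : Uᵀ * U = 1) (hV : Vᵀ * V = 1) :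
    (-(U * Vᵀ))ᵀ * -(U * Vᵀ) = 1 := by
  rw [transpose_neg, neg_mul_neg]
  exact transpose_mul_self_mul_eq_one hU (by rw [transpose_transpose, mul_eq_one_comm, hV])

lemma frobenius_norm_sq_eq_frobSq [Fintype k] (A : Matrix m k ℝ) : ‖A‖ ^ 2 = frobSq A := by
  rw [frobenius_norm_def, ← Real.sqrt_eq_rpow, Real.sq_sqrt (by positivity)]
  simp [frobSq]

lemma frobSq_eq_trace [Fintype k] (A : Matrix m k ℝ) : frobSq A = trace (Aᵀ * A) := by
  simp only [frobSq, trace, diag_apply, mul_apply, transpose_apply, sq]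
  exact Finset.sum_comm

lemma frobSq_sub_transpose_le (A : Matrix m m ℝ) : frobSq (A - Aᵀ) ≤ 4 * frobSq A := by
  rw [← frobenius_norm_sq_eq_frobSq, ← frobenius_norm_sq_eq_frobSq]
  have h := norm_sub_le A Aᵀ
  rw [frobenius_norm_transpose] at h
  nlinarith [norm_nonneg (A - Aᵀ)]

lemma frobSq_mul_of_transpose_mul_self [Fintype k] [DecidableEq k] [Fintype l] {X : Matrix m k ℝ}
    (hX : Xᵀ * X = 1) (A : Matrix k l ℝ) : frobSq (X * A) = frobSq A := by
  rw [frobSq_eq_trace, frobSq_eq_trace, transpose_mul, Matrix.mul_assoc, ← Matrix.mul_assoc Xᵀ,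
    hX, Matrix.one_mul]

lemma frobSq_mul_transpose_of_transpose_mul_self [Fintype k] [DecidableEq k] {V : Matrix m k ℝ}
    (hV : Vᵀ * V = 1) (A : Matrix m k ℝ) : frobSq (A * Vᵀ) = frobSq A := by
  rw [frobSq_eq_trace, frobSq_eq_trace, transpose_mul, transpose_transpose, Matrix.mul_assoc,
    trace_mul_comm]
  simp only [Matrix.mul_assoc, hV, Matrix.mul_one]

lemma frobSq_mul_diagonal [Fintype k] [DecidableEq k] (A : Matrix m k ℝ) (s : k → ℝ) :
    frobSq (A * diagonal s) = ∑ j, s j ^ 2 * ∑ i, A i j ^ 2 := by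
  simp only [frobSq, mul_diagonal, Finset.mul_sum]
  rw [Finset.sum_comm]
  exact Finset.sum_congr rfl fun _ _ => Finset.sum_congr rfl fun _ _ => by ring

lemma sum_sq_apply_eq_one_of_transpose_mul_self [DecidableEq k] {A : Matrix m k ℝ}
    (hA : Aᵀ * A = 1) (j : k) : ∑ i, A i j ^ 2 = 1 := by
  simpa [mul_apply, sq] using congr_fun₂ hA j j

lemma transpose_mul_apply_self_le (A B : Matrix m k ℝ) (j : k) :
    (Aᵀ * B) j j ≤ √(∑ i, A i j ^ 2) * √(∑ i, B i j ^ 2) :=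
  Real.sum_mul_le_sqrt_mul_sqrt _ _ _

lemma frobSq_sub_one_of_transpose_mul_self [Fintype k] [DecidableEq k] {Q : Matrix k k ℝ}
    (hQ : Qᵀ * Q = 1) : frobSq (Q - 1) = 2 * (Fintype.card k - trace Q) := by
  rw [frobSq_eq_trace, transpose_sub, transpose_one, sub_mul, mul_sub, mul_sub, hQ,
    Matrix.mul_one, Matrix.one_mul, Matrix.one_mul]
  simp only [trace_sub, trace_transpose, trace_one]
  ring

end Frobenius

lemma fderiv_apply_eq_trace_transpose_mul_grad {n p : ℕ} (f : Matrix (Fin n) (Fin p) ℝ → ℝ)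
    (X H : Matrix (Fin n) (Fin p) ℝ) : fderiv ℝ f X H = trace (Hᵀ * grad f X) := by
  conv_lhs => rw [matrix_eq_sum_single H]
  simp only [map_sum, trace, diag_apply, mul_apply, transpose_apply, grad, of_apply]
  rw [Finset.sum_comm]
  refine Finset.sum_congr rfl fun i _ => Finset.sum_congr rfl fun j _ => ?_
  rw [← smul_eq_mul, ← map_smul, smul_single, smul_eq_mul, mul_one]

theorem ContDiffOn.image_mul_le_add_trace {n p : ℕ} {f : Matrix (Fin n) (Fin p) ℝ → ℝ}
    {Ω : Set (Matrix (Fin n) (Fin p) ℝ)} (hf : ContDiffOn ℝ 2 f Ω) (hΩo : IsOpen Ω)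
    (hΩc : Convex ℝ Ω) {ρ γ : ℝ} (hρ : ∀ X ∈ Ω, ‖iteratedFDeriv ℝ 2 f X‖ ≤ ρ) (hργ : ρ ≤ γ)
    {X : Matrix (Fin n) (Fin p) ℝ} {Q : Matrix (Fin p) (Fin p) ℝ} (hXt : Xᵀ * X = 1)
    (hQ : Qᵀ * Q = 1) (hX : X ∈ Ω) (hXQ : X * Q ∈ Ω) :
    f (X * Q) ≤ f X + trace ((Q - 1)ᵀ * (Xᵀ * grad f X - γ • 1)) := by
  have hstep : X * Q - X = X * (Q - 1) := by rw [Matrix.mul_sub, Matrix.mul_one]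
  have hlin : fderiv ℝ f X (X * Q - X) = trace ((Q - 1)ᵀ * (Xᵀ * grad f X)) := by
    rw [fderiv_apply_eq_trace_transpose_mul_grad, hstep, transpose_mul, Matrix.mul_assoc]
  have hsq : ‖X * Q - X‖ ^ 2 = 2 * (p - trace Q) := by
    rw [frobenius_norm_sq_eq_frobSq, hstep, frobSq_mul_of_transpose_mul_self hXt,
      frobSq_sub_one_of_transpose_mul_self hQ, Fintype.card_fin]
  have hprox : trace ((Q - 1)ᵀ * (Xᵀ * grad f X - γ • 1)) =
      trace ((Q - 1)ᵀ * (Xᵀ * grad f X)) + γ * (p - trace Q) := by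
    rw [Matrix.mul_sub, trace_sub, mul_smul_comm, Matrix.mul_one, trace_smul, transpose_sub,
      transpose_one, trace_sub, trace_transpose, trace_one, Fintype.card_fin, smul_eq_mul]
    ring
  have hgap : 0 ≤ (p : ℝ) - trace Q := by nlinarith [sq_nonneg ‖X * Q - X‖]
  have hdesc := hf.image_le_add_fderiv_add_sq hΩo hΩc hρ hX hXQ
  -- `erw`: `hdesc` sees the Frobenius normed-space structure on matrices, `hlin` the plain one.
  erw [hlin] at hdesc
  rw [hsq] at hdesc
  nlinarith [mul_le_mul_of_nonneg_right hργ hgap]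

section SVD

variable {m k : Type*} [Fintype m] [Fintype k] [DecidableEq k] {U V : Matrix m k ℝ}

lemma trace_neg_polar_sub_one_transpose_mul [DecidableEq m] (hU : Uᵀ * U = 1) (hV : Vᵀ * V = 1)
    (S : Matrix k k ℝ) :
    trace ((-(U * Vᵀ) - 1)ᵀ * (U * S * Vᵀ)) = -(trace S + trace (U * S * Vᵀ)) := by
  have hpolar : (U * Vᵀ)ᵀ * (U * S * Vᵀ) = V * S * Vᵀ := by
    simp only [transpose_mul, transpose_transpose, Matrix.mul_assoc, ← Matrix.mul_assoc Uᵀ, hU,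
      Matrix.one_mul]
  rw [transpose_sub, transpose_neg, transpose_one, sub_mul, neg_mul, hpolar, Matrix.one_mul,
    trace_sub, trace_neg, Matrix.mul_assoc, trace_mul_comm, Matrix.mul_assoc, hV, Matrix.mul_one]
  ring

lemma trace_diagonal_add_trace_svd (hU : Uᵀ * U = 1) (hV : Vᵀ * V = 1) (s : k → ℝ) :
    trace (diagonal s) + trace (U * diagonal s * Vᵀ) =
      (∑ j, s j * ∑ i, (U i j + V i j) ^ 2) / 2 := by
  have hcol : ∀ j, ∑ i, (U i j + V i j) ^ 2 = 2 + 2 * ∑ i, U i j * V i j := fun j => by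
    simp only [add_sq, Finset.sum_add_distrib, sum_sq_apply_eq_one_of_transpose_mul_self hU,
      sum_sq_apply_eq_one_of_transpose_mul_self hV, Finset.mul_sum]
    ring_nf
  have htr : trace (U * diagonal s * Vᵀ) = ∑ j, s j * ∑ i, U i j * V i j := by
    rw [trace_mul_comm, ← Matrix.mul_assoc]
    simp only [trace, diag_apply, mul_diagonal]
    simp only [mul_apply, transpose_apply, Finset.sum_mul, Finset.mul_sum]
    exact Finset.sum_congr rfl fun _ _ => Finset.sum_congr rfl fun _ _ => by ring
  rw [htr, trace_diagonal, eq_div_iff two_ne_zero, add_mul, Finset.sum_mul, Finset.sum_mul,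
    ← Finset.sum_add_distrib]
  exact Finset.sum_congr rfl fun j _ => by rw [hcol]; ring

lemma frobSq_svd_sub_transpose_le (hU : Uᵀ * U = 1) (hV : Vᵀ * V = 1) {s : k → ℝ} {c : ℝ}
    (hs0 : ∀ j, 0 ≤ s j) (hsc : ∀ j, s j ≤ c) :
    frobSq (U * diagonal s * Vᵀ - (U * diagonal s * Vᵀ)ᵀ) ≤
      8 * c * (trace (diagonal s) + trace (U * diagonal s * Vᵀ)) := by
  set B := (U + V) * diagonal s * Vᵀ
  -- `B` differs from `U * diagonal s * Vᵀ` by the symmetric matrix `V * diagonal s * Vᵀ`.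
  have hskew : U * diagonal s * Vᵀ - (U * diagonal s * Vᵀ)ᵀ = B - Bᵀ := by
    simp only [B, Matrix.add_mul, transpose_add, transpose_mul, transpose_transpose,
      diagonal_transpose, Matrix.mul_assoc]
    abel
  rw [hskew, trace_diagonal_add_trace_svd hU hV]
  calc frobSq (B - Bᵀ) ≤ 4 * frobSq B := frobSq_sub_transpose_le B
    _ = 4 * ∑ j, s j ^ 2 * ∑ i, (U i j + V i j) ^ 2 := by
      rw [frobSq_mul_transpose_of_transpose_mul_self hV, frobSq_mul_diagonal]; rfl
    _ ≤ 4 * ∑ j, c * (s j * ∑ i, (U i j + V i j) ^ 2) := by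
      refine mul_le_mul_of_nonneg_left (Finset.sum_le_sum fun j _ => ?_) (by norm_num)
      rw [sq, mul_assoc]
      exact mul_le_mul_of_nonneg_right (hsc j) (mul_nonneg (hs0 j) (by positivity))
    _ = 8 * c * ((∑ j, s j * ∑ i, (U i j + V i j) ^ 2) / 2) := by
      rw [← Finset.mul_sum]; ring

end SVD

lemma diag_le_add_of_transpose_mul_sub_smul_eq {m k : Type*} [Fintype m] [Fintype k]
    [DecidableEq k] {X G : Matrix m k ℝ} (hX : Xᵀ * X = 1) {M γ : ℝ} (hγ : 0 ≤ γ)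
    (hG : ∀ v : k → ℝ, √(∑ i, (G *ᵥ v) i ^ 2) ≤ M * √(∑ j, v j ^ 2))
    {U S V : Matrix k k ℝ} (hU : Uᵀ * U = 1) (hV : Vᵀ * V = 1)
    (hZ : Xᵀ * G - γ • 1 = U * S * Vᵀ) (j : k) : S j j ≤ M + γ := by
  have hS : S = (X * U)ᵀ * (G * V) - γ • (Uᵀ * V) := by
    have : Uᵀ * (Xᵀ * G - γ • 1) * V = S := by
      rw [hZ]; simp only [Matrix.mul_assoc, hV, ← Matrix.mul_assoc Uᵀ U, hU, Matrix.one_mul,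
        Matrix.mul_one]
    rw [← this, transpose_mul, mul_sub, sub_mul, mul_smul_comm, smul_mul_assoc, Matrix.mul_one]
    simp only [Matrix.mul_assoc]
  have hGV : √(∑ i, (G * V) i j ^ 2) ≤ M := by
    have h := hG fun i => V i j
    simp only [sum_sq_apply_eq_one_of_transpose_mul_self hV, Real.sqrt_one, mul_one] at h
    exact h
  have hUV : -(Uᵀ * V) j j ≤ 1 := by
    simpa [sum_sq_apply_eq_one_of_transpose_mul_self hU,
      sum_sq_apply_eq_one_of_transpose_mul_self hV] using transpose_mul_apply_self_le (-U) V j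
  have hXUGV : ((X * U)ᵀ * (G * V)) j j ≤ M := by
    have h := transpose_mul_apply_self_le (X * U) (G * V) j
    rw [sum_sq_apply_eq_one_of_transpose_mul_self (transpose_mul_self_mul_eq_one hX hU),
      Real.sqrt_one, one_mul] at h
    exact h.trans hGV
  rw [hS, Matrix.sub_apply, Matrix.smul_apply, smul_eq_mul]
  nlinarith

theorem stmt_14 (n p : ℕ) (f : Matrix (Fin n) (Fin p) ℝ → ℝ) (ρ γ M : ℝ)
    (Ω : Set (Matrix (Fin n) (Fin p) ℝ)) (hΩo : IsOpen Ω) (hΩc : Convex ℝ Ω)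
    (hΩS : {X : Matrix (Fin n) (Fin p) ℝ | Xᵀ * X = 1} ⊆ Ω)
    (hf : ContDiffOn ℝ 2 f Ω)
    (hρ : ∀ X ∈ Ω, ‖iteratedFDeriv ℝ 2 f X‖ ≤ ρ)
    (hM : ∀ X : Matrix (Fin n) (Fin p) ℝ, Xᵀ * X = 1 →
      ∀ v : Fin p → ℝ, Real.sqrt (∑ i, ((grad f X) *ᵥ v) i ^ 2) ≤
        M * Real.sqrt (∑ j, v j ^ 2))
    (hγ : ρ < γ)
    (Xb Xp : Matrix (Fin n) (Fin p) ℝ) (hXb : Xbᵀ * Xb = 1)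
    (U S V : Matrix (Fin p) (Fin p) ℝ) (hU : Uᵀ * U = 1) (hV : Vᵀ * V = 1)
    (hSd : ∀ i j, i ≠ j → S i j = 0) (hS0 : ∀ i, 0 ≤ S i i)
    (hZ : Xbᵀ * grad f Xb - γ • 1 = U * S * Vᵀ)
    (hXp1 : Xbᵀ * grad f Xb - γ • 1 = 0 → Xp = Xb)
    (hXp2 : Xbᵀ * grad f Xb - γ • 1 ≠ 0 → Xp = Xb * (-(U * Vᵀ))) :
    (1 / (8 * (M + γ))) * frobSq (Xbᵀ * grad f Xb - (grad f Xb)ᵀ * Xb) ≤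
      f Xb - f Xp := by
  set Z := Xbᵀ * grad f Xb - γ • 1
  have hskew : Xbᵀ * grad f Xb - (grad f Xb)ᵀ * Xb = Z - Zᵀ := by
    simp only [Z, transpose_sub, transpose_smul, transpose_one, transpose_mul, transpose_transpose]
    abel
  by_cases hZ0 : Z = 0
  · rw [hXp1 hZ0, hskew, hZ0]
    simp [frobSq]
  obtain ⟨j⟩ : Nonempty (Fin p) := not_isEmpty_iff.1 fun _ => hZ0 (Subsingleton.elim _ _)
  have hγ0 : 0 ≤ γ := ((norm_nonneg _).trans (hρ Xb (hΩS hXb))).trans hγ.le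
  have hsM := diag_le_add_of_transpose_mul_sub_smul_eq hXb hγ0 (hM Xb hXb) hU hV hZ
  have hQ := transpose_mul_self_neg_mul_transpose_eq_one hU hV
  have hdecr : trace S + trace Z ≤ f Xb - f Xp := by
    have h := hf.image_mul_le_add_trace hΩo hΩc hρ hγ.le hXb hQ (hΩS hXb)
      (hΩS (transpose_mul_self_mul_eq_one hXb hQ))
    rw [← hXp2 hZ0, show Xbᵀ * grad f Xb - γ • 1 = U * S * Vᵀ from hZ,
      trace_neg_polar_sub_one_transpose_mul hU hV, ← hZ] at h
    linarith
  have hSdiag : S = diagonal (diag S) := (IsDiag.diagonal_diag fun i j h => hSd i j h).symm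
  have hnonneg : 0 ≤ trace S + trace Z := by
    rw [hZ, hSdiag, trace_diagonal_add_trace_svd hU hV]
    exact div_nonneg (Finset.sum_nonneg fun i _ => mul_nonneg (hS0 i) (by positivity)) two_pos.le
  have hbound := frobSq_svd_sub_transpose_le hU hV (s := diag S) hS0 hsM
  rw [← hSdiag, ← hZ] at hbound
  have hc : 0 ≤ 8 * (M + γ) := by linarith [hS0 j, hsM j]
  rw [hskew, one_div]
  exact inv_mul_le_of_le_mul₀ hc (hnonneg.trans hdecr)
    (hbound.trans (mul_le_mul_of_nonneg_left hdecr hc))
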